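/- arXiv:2304.07427 — 6 statements merged into one kernel-verified Lean document; each statement's English description precedes it below -/
import Mathlib

section
/- If A ≻_i B, B ≻_j C, and C ≻_k A for triples of reals A, B, C, then the indices i, j, k are pairwise distinct, i.e., {i,j,k} = {1,2,3}. -/
/-- The `k`-th face value of a 3-sided die `X = (x1, x2, x3)`, for `k ∈ {1,2,3}`. -/
def coord (X : ℝ × ℝ × ℝ) (k : ℕ) : ℝ :=
  if k = 1 then X.1 else if k = 2 then X.2.1 else X.2.2

/-- The sum of the face values of a die. -/
def diceSum (X : ℝ × ℝ × ℝ) : ℝ := X.1 + X.2.1 + X.2.2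

/-- `Dom k X Y` is the relation `X ≻ₖ Y`: `xₘ > yₘ` for both indices `m ≠ k`
in `{1,2,3}`, and `x_k < y_k`. -/
def Dom (k : ℕ) (X Y : ℝ × ℝ × ℝ) : Prop :=
  coord X k < coord Y k ∧ ∀ m ∈ ({1, 2, 3} : Set ℕ), m ≠ k → coord X m > coord Y m

/-!
A coordinate `m` outside `{i, j, k}` would give `A_m > B_m > C_m > A_m`, so `{i, j, k}` covers
`{1, 2, 3}`, and three indices covering three values are pairwise distinct.
-/

theorem mem_indices_of_dom_cycle {A B C : ℝ × ℝ × ℝ} {i j k m : ℕ}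
    (hm : m ∈ ({1, 2, 3} : Set ℕ)) (hAB : Dom i A B) (hBC : Dom j B C) (hCA : Dom k C A) :
    m ∈ ({i, j, k} : Set ℕ) := by
  simp only [Set.mem_insert_iff, Set.mem_singleton_iff]
  by_contra! hne
  obtain ⟨hmi, hmj, hmk⟩ := hne
  have hBA := hAB.2 m hm hmi
  have hCB := hBC.2 m hm hmj
  have hAC := hCA.2 m hm hmk
  linarith

theorem pairwise_ne_of_subset_insert {i j k : ℕ} (h : ({1, 2, 3} : Set ℕ) ⊆ {i, j, k}) :
    i ≠ j ∧ j ≠ k ∧ i ≠ k := by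
  simp only [Set.insert_subset_iff, Set.singleton_subset_iff, Set.mem_insert_iff,
    Set.mem_singleton_iff] at h
  omega

theorem intransitive_triple_distinct_indices
    (A B C : ℝ × ℝ × ℝ) (i j k : ℕ)
    (hi : i ∈ ({1, 2, 3} : Set ℕ)) (hj : j ∈ ({1, 2, 3} : Set ℕ))
    (hk : k ∈ ({1, 2, 3} : Set ℕ))
    (hAB : Dom i A B) (hBC : Dom j B C) (hCA : Dom k C A) :
    i ≠ j ∧ j ≠ k ∧ i ≠ k ∧ ({i, j, k} : Set ℕ) = ({1, 2, 3} : Set ℕ) := by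
  have hcover : ({1, 2, 3} : Set ℕ) ⊆ {i, j, k} := fun m hm =>
    mem_indices_of_dom_cycle hm hAB hBC hCA
  have hsub : ({i, j, k} : Set ℕ) ⊆ {1, 2, 3} :=
    Set.insert_subset hi (Set.insert_subset hj (Set.singleton_subset_iff.2 hk))
  obtain ⟨hij, hjk, hik⟩ := pairwise_ne_of_subset_insert hcover
  exact ⟨hij, hjk, hik, hsub.antisymm hcover⟩
end

section
/- There do not exist triples of reals A, B, C, D with A ≻_i B ≻_i C ≻_j D ≻_j A for any i, j ∈ {1,2,3}. -/
theorem Dom.coord_lt {k m : ℕ} {X Y : ℝ × ℝ × ℝ} (h : Dom k X Y)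
    (hm : m ∈ ({1, 2, 3} : Set ℕ)) (hmk : m ≠ k) : coord Y m < coord X m :=
  h.2 m hm hmk

theorem exists_mem_ne_ne (i j : ℕ) : ∃ m ∈ ({1, 2, 3} : Set ℕ), m ≠ i ∧ m ≠ j := by
  by_contra! h
  simp only [Set.mem_insert_iff, Set.mem_singleton_iff, forall_eq_or_imp, forall_eq] at h
  omega

theorem no_four_cycle_pattern_iijj :
    ¬ ∃ (A B C D : ℝ × ℝ × ℝ) (i j : ℕ),
      i ∈ ({1, 2, 3} : Set ℕ) ∧ j ∈ ({1, 2, 3} : Set ℕ) ∧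
      Dom i A B ∧ Dom i B C ∧ Dom j C D ∧ Dom j D A := by
  rintro ⟨A, B, C, D, i, j, -, -, hAB, hBC, hCD, hDA⟩
  obtain ⟨m, hm, hmi, hmj⟩ := exists_mem_ne_ne i j
  linarith [hAB.coord_lt hm hmi, hBC.coord_lt hm hmi, hCD.coord_lt hm hmj, hDA.coord_lt hm hmj]
end

section
/- There do not exist triples of reals A, B, C, D and distinct indices i, j ∈ {1,2,3} with A ≻_i B ≻_j C ≻_i D ≻_j A. -/
/-! Some index `k ∈ {1,2,3}` differs from both `i` and `j`, so coordinate `k` strictly decreases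
along every step of the cycle `A, B, C, D, A`. -/

theorem exists_mem_one_two_three_ne_ne (i j : ℕ) :
    ∃ k ∈ ({1, 2, 3} : Set ℕ), k ≠ i ∧ k ≠ j := by
  by_contra! h
  simp only [Set.mem_insert_iff, Set.mem_singleton_iff, forall_eq_or_imp, forall_eq] at h
  omega

theorem no_four_cycle_pattern_ijij :
    ¬ ∃ (A B C D : ℝ × ℝ × ℝ) (i j : ℕ),
      i ∈ ({1, 2, 3} : Set ℕ) ∧ j ∈ ({1, 2, 3} : Set ℕ) ∧ i ≠ j ∧
      Dom i A B ∧ Dom j B C ∧ Dom i C D ∧ Dom j D A := by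
  rintro ⟨A, B, C, D, i, j, -, -, -, hAB, hBC, hCD, hDA⟩
  obtain ⟨k, hk, hki, hkj⟩ := exists_mem_one_two_three_ne_ne i j
  linarith [hAB.2 k hk hki, hBC.2 k hk hkj, hCD.2 k hk hki, hDA.2 k hk hkj]
end

section
/- There do not exist triples of reals A, B, C, D with A ≻_1 B ≻_1 C ≻_1 D ≻_2 A. (If a1 < b1 < c1 < d1, d2 < a2... leads to contradiction since a2 > b2 > c2 > d2.) -/
theorem Dom.coord_three_lt {k : ℕ} {X Y : ℝ × ℝ × ℝ} (h : Dom k X Y) (hk : k ≠ 3) :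
    coord Y 3 < coord X 3 :=
  h.2 3 (by simp) hk.symm

theorem no_four_cycle_pattern_1112 :
    ¬ ∃ (A B C D : ℝ × ℝ × ℝ),
      Dom 1 A B ∧ Dom 1 B C ∧ Dom 1 C D ∧ Dom 2 D A := by
  rintro ⟨A, B, C, D, hAB, hBC, hCD, hDA⟩
  refine lt_irrefl (coord A 3) ?_
  calc coord A 3 < coord D 3 := hDA.coord_three_lt (by norm_num)
    _ < coord C 3 := hCD.coord_three_lt (by norm_num)
    _ < coord B 3 := hBC.coord_three_lt (by norm_num)
    _ < coord A 3 := hAB.coord_three_lt (by norm_num)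
end

section
/- For triples of reals A, B, C, D with all coordinate sums equal, if A ≻_i B, B ≻_j C, C ≻_k D, D ≻_l A hold, then the multiset {i,j,k,l} contains all three values 1, 2, 3 (i.e., at least three distinct values appear among i,j,k,l). -/
theorem mem_of_dom_four_cycle {A B C D : ℝ × ℝ × ℝ} {i j k l m : ℕ}
    (hm : m ∈ ({1, 2, 3} : Set ℕ))
    (h1 : Dom i A B) (h2 : Dom j B C) (h3 : Dom k C D) (h4 : Dom l D A) :
    m ∈ ({i, j, k, l} : Set ℕ) := by
  by_contra hm'
  simp only [Set.mem_insert_iff, Set.mem_singleton_iff, not_or] at hm'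
  obtain ⟨hmi, hmj, hmk, hml⟩ := hm'
  linarith [h1.coord_lt hm hmi, h2.coord_lt hm hmj, h3.coord_lt hm hmk, h4.coord_lt hm hml]

theorem four_cycle_needs_three_indices_general
    (A B C D : ℝ × ℝ × ℝ)
    (i j k l : ℕ)
    (hi : i ∈ ({1, 2, 3} : Set ℕ)) (hj : j ∈ ({1, 2, 3} : Set ℕ))
    (hk : k ∈ ({1, 2, 3} : Set ℕ)) (hl : l ∈ ({1, 2, 3} : Set ℕ))
    (h1 : Dom i A B) (h2 : Dom j B C) (h3 : Dom k C D) (h4 : Dom l D A) :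
    ({i, j, k, l} : Set ℕ) = ({1, 2, 3} : Set ℕ) := by
  refine Set.Subset.antisymm ?_ fun m hm => mem_of_dom_four_cycle hm h1 h2 h3 h4
  rintro m (rfl | rfl | rfl | rfl) <;> assumption

theorem four_cycle_needs_three_indices
    (A B C D : ℝ × ℝ × ℝ)
    (hAB : diceSum A = diceSum B) (hBC : diceSum B = diceSum C)
    (hCD : diceSum C = diceSum D)
    (i j k l : ℕ)
    (hi : i ∈ ({1, 2, 3} : Set ℕ)) (hj : j ∈ ({1, 2, 3} : Set ℕ))
    (hk : k ∈ ({1, 2, 3} : Set ℕ)) (hl : l ∈ ({1, 2, 3} : Set ℕ))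
    (h1 : Dom i A B) (h2 : Dom j B C) (h3 : Dom k C D) (h4 : Dom l D A) :
    ({i, j, k, l} : Set ℕ) = ({1, 2, 3} : Set ℕ) :=
  four_cycle_needs_three_indices_general A B C D i j k l hi hj hk hl h1 h2 h3 h4
end

section
/- The isometry of (ℝ³)⁴ given by (A,B,C,D) ↦ (A*, D*, C*, B*), where X* = (1−x3, 1−x2, 1−x1), maps the event {A ≻_1 B ≻_1 C ≻_2 D ≻_3 A} bijectively onto the event {A ≻_1 B ≻_2 C ≻_3 D ≻_3 A} (within the space of quadruples of dice with entries in [0,1] and each coordinate sum 3/2). -/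
/-- The star operator `X ↦ X* = (1 − x3, 1 − x2, 1 − x1)`. -/
def star3 (X : ℝ × ℝ × ℝ) : ℝ × ℝ × ℝ := (1 - X.2.2, 1 - X.2.1, 1 - X.1)

/-- `X` is a die: all faces in `[0,1]` and total `3/2`. -/
def IsDie (X : ℝ × ℝ × ℝ) : Prop :=
  X.1 ∈ Set.Icc (0 : ℝ) 1 ∧ X.2.1 ∈ Set.Icc (0 : ℝ) 1 ∧
    X.2.2 ∈ Set.Icc (0 : ℝ) 1 ∧ diceSum X = 3 / 2

/-- The map `(A,B,C,D) ↦ (A*, D*, C*, B*)`. -/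
def starMap (q : (ℝ × ℝ × ℝ) × (ℝ × ℝ × ℝ) × (ℝ × ℝ × ℝ) × (ℝ × ℝ × ℝ)) :
    (ℝ × ℝ × ℝ) × (ℝ × ℝ × ℝ) × (ℝ × ℝ × ℝ) × (ℝ × ℝ × ℝ) :=
  (star3 q.1, star3 q.2.2.2, star3 q.2.2.1, star3 q.2.1)

/-- The event `G₁₁₂₃`: `A ≻₁ B ≻₁ C ≻₂ D ≻₃ A` within the space of quadruples of dice. -/
def G1123 : Set ((ℝ × ℝ × ℝ) × (ℝ × ℝ × ℝ) × (ℝ × ℝ × ℝ) × (ℝ × ℝ × ℝ)) :=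
  {q | IsDie q.1 ∧ IsDie q.2.1 ∧ IsDie q.2.2.1 ∧ IsDie q.2.2.2 ∧
    Dom 1 q.1 q.2.1 ∧ Dom 1 q.2.1 q.2.2.1 ∧ Dom 2 q.2.2.1 q.2.2.2 ∧
    Dom 3 q.2.2.2 q.1}

/-- The event `G₁₂₃₃`: `A ≻₁ B ≻₂ C ≻₃ D ≻₃ A` within the space of quadruples of dice. -/
def G1233 : Set ((ℝ × ℝ × ℝ) × (ℝ × ℝ × ℝ) × (ℝ × ℝ × ℝ) × (ℝ × ℝ × ℝ)) :=
  {q | IsDie q.1 ∧ IsDie q.2.1 ∧ IsDie q.2.2.1 ∧ IsDie q.2.2.2 ∧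
    Dom 1 q.1 q.2.1 ∧ Dom 2 q.2.1 q.2.2.1 ∧ Dom 3 q.2.2.1 q.2.2.2 ∧
    Dom 3 q.2.2.2 q.1}

theorem star3_involutive : Function.Involutive star3 := fun X => by
  simp [star3]

theorem starMap_involutive : Function.Involutive starMap := fun q => by
  simp [starMap, star3_involutive _]

theorem IsDie.star3 {X : ℝ × ℝ × ℝ} (h : IsDie X) : IsDie (star3 X) := by
  obtain ⟨⟨h10, h11⟩, ⟨h20, h21⟩, ⟨h30, h31⟩, hsum⟩ := h
  simp only [IsDie, _root_.star3, diceSum, Set.mem_Icc] at hsum ⊢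
  refine ⟨⟨?_, ?_⟩, ⟨?_, ?_⟩, ⟨?_, ?_⟩, ?_⟩ <;> linarith

theorem Dom.index_mem {k : ℕ} {X Y : ℝ × ℝ × ℝ} (h : Dom k X Y) :
    k ∈ ({1, 2, 3} : Set ℕ) := by
  by_contra hk
  obtain ⟨hlt, hgt⟩ := h
  -- outside `{1, 2, 3}`, `coord · k` is the third face, which `Dom k` also requires to decrease
  have hk3 : ∀ Z, coord Z k = coord Z 3 := fun Z => by
    simp only [Set.mem_insert_iff, Set.mem_singleton_iff, not_or] at hk
    simp [coord, hk.1, hk.2.1]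
  exact (hgt 3 (by simp) fun h3 => hk (by simp [← h3])).asymm (by simpa [hk3] using hlt)

theorem Dom.star3 {k : ℕ} {X Y : ℝ × ℝ × ℝ} (h : Dom k X Y) :
    Dom (4 - k) (star3 Y) (star3 X) := by
  obtain rfl | rfl | rfl := h.index_mem <;>
    simp_all [Dom, coord, _root_.star3]

theorem starMap_mapsTo_G1233 : Set.MapsTo starMap G1123 G1233 :=
  fun _ ⟨hA, hB, hC, hD, hAB, hBC, hCD, hDA⟩ =>
    ⟨hA.star3, hD.star3, hC.star3, hB.star3, hDA.star3, hCD.star3, hBC.star3, hAB.star3⟩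

theorem starMap_mapsTo_G1123 : Set.MapsTo starMap G1233 G1123 :=
  fun _ ⟨hA, hB, hC, hD, hAB, hBC, hCD, hDA⟩ =>
    ⟨hA.star3, hD.star3, hC.star3, hB.star3, hDA.star3, hCD.star3, hBC.star3, hAB.star3⟩

theorem starMap_bijects_G1123_onto_G1233 :
    Set.BijOn starMap G1123 G1233 :=
  Set.InvOn.bijOn ⟨fun q _ => starMap_involutive q, fun q _ => starMap_involutive q⟩
    starMap_mapsTo_G1233 starMap_mapsTo_G1123
end
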